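/- arXiv:2304.01338 — 8 statements merged into one kernel-verified Lean document; each statement's English description precedes it below -/
import Mathlib

section
/- Let U ⊆ ℝⁿ be an open neighborhood of the origin and F : U → ℝ a function that is real analytic at the origin. Then F satisfies the monomial curve condition at 0; that is, for every n-tuple of positive integers (m₁,…,mₙ) the one-variable function t ↦ F(t^{m₁},…,t^{mₙ}) admits a convergent power series expansion Σ_k a_k t^k on a neighborhood of 0 ∈ ℝ in which a_k = 0 for every k outside the additive submonoid of ℕ generated by m₁,…,mₙ. -/
/-!
Along the monomial curve `γ(t) = (t^{m₁}, …, t^{mₙ})`, whose power series only has terms of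
degrees `m₁, …, mₙ`, the composite series of `F ∘ γ` has as its `k`-th term a sum over the
compositions `k = k₁ + ⋯ + kᵣ`, each term of which involves the degree-`kⱼ` terms of `γ`.
Such a term vanishes unless every `kⱼ` is one of the `mᵢ`, which forces `k` into the additive
submonoid generated by the `mᵢ`.
-/

/-- `F` satisfies the monomial curve condition at `0`: for every tuple of positive integers
`(m₁, …, mₙ)`, the one-variable function `t ↦ F(t^{m₁}, …, t^{mₙ})` admits a convergent
power series expansion at `0` whose coefficients vanish outside the additive submonoid of
`ℕ` generated by `m₁, …, mₙ`. -/
def MonomialCurveCondition {n : ℕ} (F : (Fin n → ℝ) → ℝ) : Prop :=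
  ∀ m : Fin n → ℕ, (∀ i, 0 < m i) →
    ∃ p : FormalMultilinearSeries ℝ ℝ ℝ,
      HasFPowerSeriesAt (fun t : ℝ => F (fun i => t ^ m i)) p 0 ∧
      ∀ k ∉ AddSubmonoid.closure (Set.range m), p.coeff k = 0

open FormalMultilinearSeries

theorem Composition.exists_blocksFun_notMem {k : ℕ} {S : AddSubmonoid ℕ} (c : Composition k)
    (hk : k ∉ S) : ∃ j, c.blocksFun j ∉ S := by
  by_contra! h
  exact hk (c.sum_blocksFun ▸ S.sum_mem fun j _ => h j)

theorem FormalMultilinearSeries.comp_eq_zero_of_notMem {𝕜 E F G : Type*}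
    [NontriviallyNormedField 𝕜] [NormedAddCommGroup E] [NormedSpace 𝕜 E]
    [NormedAddCommGroup F] [NormedSpace 𝕜 F] [NormedAddCommGroup G] [NormedSpace 𝕜 G]
    (q : FormalMultilinearSeries 𝕜 F G) {p : FormalMultilinearSeries 𝕜 E F}
    {S : AddSubmonoid ℕ} (hp : ∀ k ∉ S, p k = 0) {k : ℕ} (hk : k ∉ S) : q.comp p k = 0 := by
  refine Finset.sum_eq_zero fun c _ => ?_
  ext v
  obtain ⟨j, hj⟩ := c.exists_blocksFun_notMem hk
  rw [compAlongComposition_apply]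
  exact (q c.length).map_coord_zero j (by simp [applyComposition, hp _ hj])

section MonomialCurve

variable (𝕜 : Type*) [NontriviallyNormedField 𝕜] {ι : Type*} [Fintype ι] (m : ι → ℕ)

noncomputable def monomialCurveSeries : FormalMultilinearSeries 𝕜 𝕜 (ι → 𝕜) :=
  fun k => ContinuousMultilinearMap.mkPiRing 𝕜 (Fin k) fun i => if m i = k then 1 else 0

theorem coeff_monomialCurveSeries (k : ℕ) :
    (monomialCurveSeries 𝕜 m).coeff k = fun i => if m i = k then 1 else 0 := by
  simp [coeff, monomialCurveSeries]

theorem monomialCurveSeries_eq_zero {k : ℕ} (hk : k ∉ Set.range m) :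
    monomialCurveSeries 𝕜 m k = 0 := by
  rw [← coeff_eq_zero, coeff_monomialCurveSeries]
  ext i
  exact if_neg fun h => hk ⟨i, h⟩

theorem radius_monomialCurveSeries : (monomialCurveSeries 𝕜 m).radius = ⊤ :=
  radius_eq_top_of_forall_image_add_eq_zero _ (Finset.univ.sup m + 1) fun j =>
    monomialCurveSeries_eq_zero 𝕜 m fun ⟨i, hi⟩ => by
      have := Finset.le_sup (f := m) (Finset.mem_univ i)
      omega

theorem hasFPowerSeriesOnBall_monomialCurveSeries :
    HasFPowerSeriesOnBall (fun t : 𝕜 => fun i => t ^ m i) (monomialCurveSeries 𝕜 m) 0 ⊤ where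
  r_le := (radius_monomialCurveSeries 𝕜 m).ge
  r_pos := ENNReal.zero_lt_top
  hasSum {y} _ := by
    rw [zero_add, Pi.hasSum]
    intro i
    convert hasSum_ite_eq (m i) (y ^ m i) using 1
    ext k
    by_cases h : k = m i <;> simp [coeff_monomialCurveSeries, eq_comm, h]

end MonomialCurve

theorem monomialCurveCondition_of_analyticAt_general
    (n : ℕ)
    (F : (Fin n → ℝ) → ℝ) (hF : AnalyticAt ℝ F 0) :
    MonomialCurveCondition F := by
  intro m hm
  obtain ⟨q, hq⟩ := hF
  have hcurve_zero : (fun i => (0 : ℝ) ^ m i) = 0 := funext fun i => zero_pow (hm i).ne'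
  refine ⟨q.comp (monomialCurveSeries ℝ m),
    (hcurve_zero ▸ hq).comp (hasFPowerSeriesOnBall_monomialCurveSeries ℝ m).hasFPowerSeriesAt,
    fun k hk => coeff_eq_zero.mpr (q.comp_eq_zero_of_notMem (fun j hj => ?_) hk)⟩
  exact monomialCurveSeries_eq_zero ℝ m fun hj' => hj (AddSubmonoid.subset_closure hj')

/-- easy direction of Theorem 1. A function that is real analytic at the
origin of an open neighborhood `U ⊆ ℝⁿ` of `0` satisfies the monomial curve condition. -/
theorem monomialCurveCondition_of_analyticAt
    (n : ℕ) (U : Set (Fin n → ℝ)) (hU : IsOpen U) (h0 : (0 : Fin n → ℝ) ∈ U)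
    (F : (Fin n → ℝ) → ℝ) (hF : AnalyticAt ℝ F 0) :
    MonomialCurveCondition F :=
  monomialCurveCondition_of_analyticAt_general n F hF
end

section
/- Let K be a field and F ∈ K[[x₁,…,xₙ]] a formal power series such that for every n-tuple of positive integers (m₁,…,mₙ), the power series φ_m(F) ∈ K[[t]] lies in K[[t^{m₁},…,t^{mₙ}]]. Let σ be an elementary monomial substitution on K[[x₁,…,xₙ]]. Then the power series F' = σ(F) also has the property that φ_m(F') lies in K[[t^{m₁},…,t^{mₙ}]] for every n-tuple of positive integers (m₁,…,mₙ). -/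
open Finsupp in
/-- The substitution `φ_m : K[[x₁,…,xₙ]] → K[[t]]`, `xᵢ ↦ t^{mᵢ}` (for `m` with all
`mᵢ ≥ 1`): the coefficient of `t^k` is the sum of the coefficients of `F` over all
exponent vectors `e` with `∑ᵢ eᵢ mᵢ = k`. -/
noncomputable def monomialCurveSubst {K : Type*} [CommRing K] {n : ℕ} (m : Fin n → ℕ)
    (F : MvPowerSeries (Fin n) K) : PowerSeries K :=
  PowerSeries.mk fun k =>
    ∑ e ∈ (Finset.Iic (equivFunOnFinite.symm fun _ : Fin n => k)).filter
        (fun e : Fin n →₀ ℕ => ∑ i, e i * m i = k),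
      MvPowerSeries.coeff (R := K) e F

open scoped Classical in
/-- The `K`-linear substitution of monomials along an (injective) map `T` on exponents:
it sends the monomial `x^e` to `x^{T e}`. -/
noncomputable def exponentSubst {K : Type*} [CommRing K] {n : ℕ}
    (T : (Fin n →₀ ℕ) → (Fin n →₀ ℕ)) (F : MvPowerSeries (Fin n) K) :
    MvPowerSeries (Fin n) K :=
  fun d => if h : ∃ e, T e = d then MvPowerSeries.coeff (R := K) h.choose F else 0

/-- An elementary monomial substitution on `K[[x₁,…,xₙ]]`: the endomorphism induced
either by a permutation of the variables, or (for `r` with 1-based index `1 < r ≤ n`,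
i.e. `0 < (r : ℕ)` in 0-based indexing) by `xᵢ ↦ xᵢxᵣ` for `i < r` and `xᵢ ↦ xᵢ` for
`i ≥ r`; on exponents the latter sends `e` to `e + (∑_{i<r} eᵢ)·δᵣ`. -/
def IsElemMonomialSubst {K : Type*} [CommRing K] {n : ℕ}
    (σ : MvPowerSeries (Fin n) K → MvPowerSeries (Fin n) K) : Prop :=
  (∃ e : Equiv.Perm (Fin n), σ = exponentSubst (Finsupp.equivMapDomain e)) ∨
  (∃ r : Fin n, 0 < (r : ℕ) ∧ σ = exponentSubst
    (fun a => a + Finsupp.single r (∑ i ∈ Finset.univ.filter (fun i => i < r), a i)))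

/-!
An elementary substitution `σ` acts on exponents by an injective map `T`, and every positive
weight `m` pulls back along `T` to a positive weight `m'`: `m' = m ∘ ε` for a permutation `ε`,
and `m'ᵢ = mᵢ + m_r` for `i < r` for the shear. Hence `φ_m(σ F) = φ_{m'}(F)`, and each
`m'ᵢ` lies in the monoid generated by the `mᵢ`, so `φ_{m'}(F)` vanishes outside that monoid.
-/

open Finsupp

lemma weight_equivMapDomain {α β M : Type*} [AddCommMonoid M] (ε : α ≃ β) (w : β → M)
    (e : α →₀ ℕ) : weight w (equivMapDomain ε e) = weight (w ∘ ε) e := by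
  simp only [weight_apply, sum_equivMapDomain, Function.comp_apply]

section Shear

variable {ι : Type*} [DecidableEq ι]

/-- Exponent map of the substitution `xᵢ ↦ xᵢ x_r` for `i ∈ s`. -/
noncomputable def shear (s : Finset ι) (r : ι) (a : ι →₀ ℕ) : ι →₀ ℕ :=
  a + single r (∑ i ∈ s, a i)

lemma shear_injective {s : Finset ι} {r : ι} (hr : r ∉ s) : Function.Injective (shear s r) := by
  intro a b h
  have hoff : ∀ i ≠ r, a i = b i := fun i hi => by
    simpa [shear, single_apply, hi.symm] using DFunLike.congr_fun h i
  have hsum : ∑ i ∈ s, a i = ∑ i ∈ s, b i :=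
    Finset.sum_congr rfl fun i hi => hoff i (ne_of_mem_of_not_mem hi hr)
  ext i
  by_cases hi : i = r
  · subst hi
    simpa [shear, hsum] using DFunLike.congr_fun h i
  · exact hoff i hi

lemma weight_shear {M : Type*} [Fintype ι] [AddCommMonoid M] (s : Finset ι) (r : ι)
    (w : ι → M) (a : ι →₀ ℕ) :
    weight w (shear s r a) = weight (fun i => if i ∈ s then w i + w r else w i) a := by
  rw [shear, map_add, weight_single, weight_eq_sum, weight_eq_sum, Finset.sum_smul]
  simp only [apply_ite, smul_add, Finset.sum_ite, Finset.sum_add_distrib]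
  rw [← Finset.sum_filter_add_sum_filter_not Finset.univ (· ∈ s), Finset.filter_mem_eq_inter,
    Finset.univ_inter]
  abel

end Shear

lemma mem_filter_Iic_iff_weight_eq {n : ℕ} {m : Fin n → ℕ} (hm : ∀ i, 0 < m i) (k : ℕ)
    (e : Fin n →₀ ℕ) :
    e ∈ (Finset.Iic (equivFunOnFinite.symm fun _ : Fin n => k)).filter
        (fun e : Fin n →₀ ℕ => ∑ i, e i * m i = k) ↔ weight m e = k := by
  simp only [Finset.mem_filter, Finset.mem_Iic, weight_eq_sum, smul_eq_mul,
    and_iff_right_iff_imp]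
  rintro rfl i
  calc e i ≤ e i * m i := Nat.le_mul_of_pos_right _ (hm i)
    _ ≤ ∑ j, e j * m j :=
      Finset.single_le_sum (f := fun j => e j * m j) (fun j _ => Nat.zero_le _) (Finset.mem_univ i)

section Substitution

variable {K : Type*} [CommRing K] {n : ℕ} {T : (Fin n →₀ ℕ) → (Fin n →₀ ℕ)}
  (F : MvPowerSeries (Fin n) K)

lemma coeff_exponentSubst_apply (hT : Function.Injective T) (e : Fin n →₀ ℕ) :
    MvPowerSeries.coeff (T e) (exponentSubst T F) = MvPowerSeries.coeff e F := by
  have h : ∃ a, T a = T e := ⟨e, rfl⟩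
  rw [MvPowerSeries.coeff_apply, exponentSubst, dif_pos h, hT h.choose_spec]

lemma coeff_exponentSubst_of_notMem_range {d : Fin n →₀ ℕ} (hd : d ∉ Set.range T) :
    MvPowerSeries.coeff d (exponentSubst T F) = 0 := by
  rw [MvPowerSeries.coeff_apply, exponentSubst]
  exact dif_neg hd

theorem monomialCurveSubst_exponentSubst {m m' : Fin n → ℕ} (hm : ∀ i, 0 < m i)
    (hm' : ∀ i, 0 < m' i) (hT : Function.Injective T) (hw : ∀ e, weight m (T e) = weight m' e) :
    monomialCurveSubst m (exponentSubst T F) = monomialCurveSubst m' F := by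
  ext k
  simp only [monomialCurveSubst, PowerSeries.coeff_mk]
  refine (Finset.sum_of_injOn T hT.injOn ?_ ?_ ?_).symm
  · intro e he
    rw [Finset.mem_coe, mem_filter_Iic_iff_weight_eq hm', ← hw] at he
    rwa [Finset.mem_coe, mem_filter_Iic_iff_weight_eq hm]
  · rintro d hdS hd
    refine coeff_exponentSubst_of_notMem_range F fun ⟨e, he⟩ => hd ⟨e, ?_, he⟩
    rw [Finset.mem_coe, mem_filter_Iic_iff_weight_eq hm', ← hw, he,
      ← mem_filter_Iic_iff_weight_eq hm]
    exact hdS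
  · exact fun e _ => (coeff_exponentSubst_apply F hT e).symm

end Substitution

lemma IsElemMonomialSubst.exists_weight_pullback {K : Type*} [CommRing K] {n : ℕ}
    {σ : MvPowerSeries (Fin n) K → MvPowerSeries (Fin n) K} (hσ : IsElemMonomialSubst σ)
    {m : Fin n → ℕ} (hm : ∀ i, 0 < m i) :
    ∃ (T : (Fin n →₀ ℕ) → (Fin n →₀ ℕ)) (m' : Fin n → ℕ), σ = exponentSubst T ∧
      Function.Injective T ∧ (∀ i, 0 < m' i) ∧ (∀ e, weight m (T e) = weight m' e) ∧
      AddSubmonoid.closure (Set.range m') ≤ AddSubmonoid.closure (Set.range m) := by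
  rcases hσ with ⟨ε, rfl⟩ | ⟨r, -, rfl⟩
  · refine ⟨_, m ∘ ε, rfl, (equivCongrLeft ε).injective, fun i => hm _,
      weight_equivMapDomain ε m, ?_⟩
    rw [Set.range_comp, ε.range_eq_univ, Set.image_univ]
  · refine ⟨shear (Finset.univ.filter (· < r)) r, _, rfl, shear_injective (by simp), ?_,
      weight_shear _ r m, ?_⟩
    · intro i
      split_ifs
      exacts [Nat.add_pos_left (hm i) _, hm i]
    · rw [AddSubmonoid.closure_le, Set.range_subset_iff]
      intro i
      split_ifs
      · exact add_mem (AddSubmonoid.subset_closure ⟨i, rfl⟩)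
          (AddSubmonoid.subset_closure ⟨r, rfl⟩)
      · exact AddSubmonoid.subset_closure ⟨i, rfl⟩

/-- invariance claim in Definition 2 of the paper. If `F ∈ K[[x₁,…,xₙ]]`
satisfies `φ_m(F) ∈ K[[t^{m₁},…,t^{mₙ}]]` for every tuple of positive integers `m`, then so
does `σ(F)` for any elementary monomial substitution `σ`. -/
theorem monomialCurveCondition_invariant_under_elemSubst
    {K : Type*} [Field K] (n : ℕ) (F : MvPowerSeries (Fin n) K)
    (hF : ∀ m : Fin n → ℕ, (∀ i, 0 < m i) →
      ∀ k ∉ AddSubmonoid.closure (Set.range m),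
        PowerSeries.coeff (R := K) k (monomialCurveSubst m F) = 0)
    (σ : MvPowerSeries (Fin n) K → MvPowerSeries (Fin n) K)
    (hσ : IsElemMonomialSubst σ) :
    ∀ m : Fin n → ℕ, (∀ i, 0 < m i) →
      ∀ k ∉ AddSubmonoid.closure (Set.range m),
        PowerSeries.coeff (R := K) k (monomialCurveSubst m (σ F)) = 0 := by
  intro m hm k hk
  obtain ⟨T, m', rfl, hT, hm', hw, hle⟩ := hσ.exists_weight_pullback hm
  rw [monomialCurveSubst_exponentSubst F hm hm' hT hw]
  exact hF m' hm' k fun hk' => hk (hle hk')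
end

section
/- Let n ≥ 2 and 1 < r ≤ n. Let a = (a₁,…,aₙ) ∈ ℕⁿ satisfy aᵣ < a₁ + ⋯ + a_{r−1}. Let m' = (m'₁,…,m'ₙ) be positive integers such that the only c ∈ ℕⁿ with Σᵢ cᵢm'ᵢ = Σᵢ aᵢm'ᵢ is c = a. Define mᵢ = m'ᵢ + m'ᵣ for 1 ≤ i ≤ r−1 and mᵢ = m'ᵢ for r ≤ i ≤ n. Then the integer Σᵢ aᵢm'ᵢ does not belong to the additive submonoid of ℕ generated by m₁,…,mₙ; that is, there is no c ∈ ℕⁿ with Σᵢ cᵢmᵢ = Σᵢ aᵢm'ᵢ. -/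
/-!
If `∑ cᵢ mᵢ = ∑ aᵢ m'ᵢ`, then, since `mᵢ = m'ᵢ + m'ᵣ` for `i < r`, moving the surplus
`S = ∑_{i<r} cᵢ` onto the `r`-th coordinate gives a second representation `c + S eᵣ` of the
same integer with respect to `m'`. Uniqueness forces `c + S eᵣ = a`, hence `cᵢ = aᵢ` for `i < r`
and `aᵣ = cᵣ + ∑_{i<r} aᵢ ≥ ∑_{i<r} aᵢ`, contradicting `aᵣ < ∑_{i<r} aᵢ`.
-/

open Finset

section

variable {ι R : Type*} [Fintype ι] [CommSemiring R]

theorem sum_mul_ite_add_eq (p : ι → Prop) [DecidablePred p] (c w : ι → R) (k : R) :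
    ∑ i, c i * (if p i then w i + k else w i)
      = ∑ i, c i * w i + (∑ i ∈ univ.filter p, c i) * k := by
  have h : ∀ i, c i * (if p i then w i + k else w i) = c i * w i + if p i then c i * k else 0 := by
    intro i
    split_ifs <;> ring
  rw [sum_congr rfl fun i _ => h i, sum_add_distrib, ← sum_filter, sum_mul]

theorem sum_add_single_mul [DecidableEq ι] (c w : ι → R) (r : ι) (s : R) :
    ∑ i, (c + Pi.single r s : ι → R) i * w i = ∑ i, c i * w i + s * w r := by
  simp [add_mul, sum_add_distrib, Pi.single_apply]

end

/-- Indices are 0-based: the 1-indexed coordinate `r` with `1 < r ≤ n` corresponds to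
`r : Fin n` with `0 < (r : ℕ)`, and `a₁ + ⋯ + a_{r−1}` is the sum of `a i` over `i < r`. -/
theorem monomial_curve_failure_general
    (n : ℕ) (r : Fin n)
    (a : Fin n → ℕ)
    (ha : a r < ∑ i ∈ Finset.univ.filter (fun i => i < r), a i)
    (m' : Fin n → ℕ)
    (huniq : ∀ c : Fin n → ℕ, ∑ i, c i * m' i = ∑ i, a i * m' i → c = a)
    (m : Fin n → ℕ)
    (hm : ∀ i, m i = if i < r then m' i + m' r else m' i) :
    ¬ ∃ c : Fin n → ℕ, ∑ i, c i * m i = ∑ i, a i * m' i := by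
  rintro ⟨c, hc⟩
  set S := ∑ i ∈ univ.filter (fun i => i < r), c i
  have hrep : (c + Pi.single r S : Fin n → ℕ) = a := by
    refine huniq _ ?_
    rw [sum_add_single_mul, ← hc, funext hm, sum_mul_ite_add_eq]
  have hlow : ∀ i, i < r → c i = a i := fun i hi => by
    simpa [Pi.single_apply, hi.ne] using congrFun hrep i
  have hS : S = ∑ i ∈ univ.filter (fun i => i < r), a i :=
    sum_congr rfl fun i hi => hlow i (mem_filter.mp hi).2
  have hr : c r + S = a r := by simpa using congrFun hrep r
  omega

/-- The arithmetic core of Step 3 of the proof of Theorem 1.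
Indices are 0-based: the 1-indexed coordinate `r` with `1 < r ≤ n` corresponds to
`r : Fin n` with `0 < (r : ℕ)`, and `a₁ + ⋯ + a_{r−1}` is the sum of `a i` over `i < r`. -/
theorem monomial_curve_failure
    (n : ℕ) (hn : 2 ≤ n) (r : Fin n) (hr : 0 < (r : ℕ))
    (a : Fin n → ℕ)
    (ha : a r < ∑ i ∈ Finset.univ.filter (fun i => i < r), a i)
    (m' : Fin n → ℕ) (hm' : ∀ i, 0 < m' i)
    (huniq : ∀ c : Fin n → ℕ, ∑ i, c i * m' i = ∑ i, a i * m' i → c = a)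
    (m : Fin n → ℕ)
    (hm : ∀ i, m i = if i < r then m' i + m' r else m' i) :
    ¬ ∃ c : Fin n → ℕ, ∑ i, c i * m i = ∑ i, a i * m' i :=
  monomial_curve_failure_general n r a ha m' huniq m hm
end

section
/- Let a₁,…,aₙ be positive integers. Then there exist pairwise distinct prime numbers m₁,…,mₙ such that the only tuple (c₁,…,cₙ) ∈ ℕⁿ with Σᵢ cᵢmᵢ = Σᵢ aᵢmᵢ is cᵢ = aᵢ for all i. -/
/-!
Take the weights among the primes of a dyadic window `(N, 2N]`. Then `∑ cᵢ mᵢ = ∑ aᵢ mᵢ` forces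
`cᵢ ≤ 2 ∑ aⱼ`, so `c - a` is an integer relation among the `mᵢ` with coefficients bounded by some
`B` depending only on `a`. Such relations are avoided greedily: once `m₁, …, mₖ` are chosen, at most
`(2B + 1)^(k+1)` integers `q` admit a relation `e q + ∑ dᵢ mᵢ = 0` with `e ≠ 0`. So it suffices that
some dyadic window contains more than `(2B + 1)^n` primes. If every window held fewer than `F`
primes, then `π (2^t) ≤ t F`, contradicting Chebyshev's bound `2^x ≤ (x + 1)^(π x + 1)`.
-/

open Finset Filter
open scoped Nat.Prime

theorem lcmUpto_le_pow_primeCounting (n : ℕ) : Nat.lcmUpto n ≤ n ^ π n := by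
  rw [Nat.lcmUpto_eq_prod_pow_log, ← Nat.primesLE_card_eq_primeCounting]
  refine prod_le_pow_card _ _ _ fun p hp ↦ Nat.pow_log_le_self p ?_
  have := Nat.two_le_of_mem_primesLE hp
  have := Nat.le_of_mem_primesLE hp
  omega

theorem two_pow_le_succ_pow_primeCounting (n : ℕ) : 2 ^ n ≤ (n + 1) ^ (π n + 1) := calc
  2 ^ n ≤ (n + 1) * Nat.lcmUpto n := Chebyshev.two_pow_le_mul_lcmUpto n
  _ ≤ (n + 1) * (n + 1) ^ π n := by
    grw [lcmUpto_le_pow_primeCounting]; gcongr; omega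
  _ = (n + 1) ^ (π n + 1) := (pow_succ' _ _).symm

theorem exists_succ_mul_lt_two_pow (F : ℕ) : ∃ t, (t + 1) * (t * F + 1) < 2 ^ t := by
  have hlim := tendsto_pow_const_div_const_pow_of_one_lt 2 (r := 2) one_lt_two
  obtain ⟨t, hsmall, ht⟩ := ((hlim.eventually (gt_mem_nhds
    (show (0 : ℝ) < 1 / (4 * (F + 1)) by positivity))).and (eventually_ge_atTop 1)).exists
  refine ⟨t, ?_⟩
  have hquadratic : (t + 1) * (t * F + 1) ≤ 4 * (F + 1) * t ^ 2 := by
    have htt : t ≤ t ^ 2 := by nlinarith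
    nlinarith [Nat.mul_le_mul_right F htt]
  have hexp : (4 * (F + 1) * t ^ 2 : ℝ) < 2 ^ t := by
    rw [lt_div_iff₀ (by positivity), div_mul_eq_mul_div, div_lt_one (by positivity)] at hsmall
    linarith
  exact hquadratic.trans_lt (by exact_mod_cast hexp)

theorem primeCounting_two_pow_le {F : ℕ} (hF : ∀ N, π (2 * N) < π N + F) (t : ℕ) :
    π (2 ^ t) ≤ t * F := by
  induction t with
  | zero => simp
  | succ t ih => grw [pow_succ', (hF _).le, ih, add_mul, one_mul]

theorem exists_primeCounting_add_le_primeCounting_two_mul (F : ℕ) :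
    ∃ N, π N + F ≤ π (2 * N) := by
  by_contra! hF
  obtain ⟨t, ht⟩ := exists_succ_mul_lt_two_pow F
  have : 2 ^ 2 ^ t ≤ 2 ^ ((t + 1) * (t * F + 1)) := calc
    2 ^ 2 ^ t ≤ (2 ^ t + 1) ^ (π (2 ^ t) + 1) := two_pow_le_succ_pow_primeCounting _
    _ ≤ (2 ^ (t + 1)) ^ (t * F + 1) := by
      gcongr
      · omega
      · rw [pow_succ]; have := Nat.one_le_two_pow (n := t); omega
      · exact primeCounting_two_pow_le hF t
    _ = 2 ^ ((t + 1) * (t * F + 1)) := (pow_mul _ _ _).symm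
  exact ht.not_ge ((Nat.pow_le_pow_iff_right (by norm_num)).mp this)

theorem mem_primesLE_sdiff_primesLE {M N p : ℕ} :
    p ∈ Nat.primesLE M \ Nat.primesLE N ↔ p.Prime ∧ N < p ∧ p ≤ M := by
  rw [Finset.mem_sdiff, Nat.mem_primesLE, Nat.mem_primesLE]
  constructor
  · rintro ⟨⟨hle, hp⟩, hnot⟩
    exact ⟨hp, not_le.mp fun h ↦ hnot ⟨h, hp⟩, hle⟩
  · rintro ⟨hp, hlt, hle⟩
    exact ⟨⟨hle, hp⟩, fun h ↦ hlt.not_ge h.1⟩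

theorem le_two_mul_sum_of_sum_mul_eq {ι : Type*} [Fintype ι] {N : ℕ} {m c a : ι → ℕ}
    (hlo : ∀ i, N < m i) (hhi : ∀ i, m i ≤ 2 * N) (h : ∑ i, c i * m i = ∑ i, a i * m i)
    (i : ι) : c i ≤ 2 * ∑ j, a j := by
  refine Nat.le_of_mul_le_mul_right ?_ (Nat.succ_pos N)
  calc c i * (N + 1) ≤ c i * m i := Nat.mul_le_mul_left _ (hlo i)
    _ ≤ ∑ j, c j * m j := single_le_sum (f := fun j ↦ c j * m j) (by simp) (mem_univ i)
    _ = ∑ j, a j * m j := h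
    _ ≤ ∑ j, a j * (2 * N) := sum_le_sum fun j _ ↦ Nat.mul_le_mul_left _ (hhi j)
    _ = (2 * ∑ j, a j) * N := by rw [← sum_mul]; ring
    _ ≤ (2 * ∑ j, a j) * (N + 1) := Nat.mul_le_mul_left _ N.le_succ

def NoSmallRelation {ι : Type*} [Fintype ι] (B : ℕ) (p : ι → ℤ) : Prop :=
  ∀ d : ι → ℤ, (∀ i, |d i| ≤ B) → ∑ i, d i * p i = 0 → d = 0

namespace NoSmallRelation

variable {ι : Type*} [Fintype ι] {B : ℕ} {p : ι → ℤ}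

theorem injective (h : NoSmallRelation B p) (hB : 1 ≤ B) : Function.Injective p := by
  classical
  intro i j hij
  by_contra hne
  have hd := congrFun (h (Pi.single i 1 - Pi.single j 1) (fun k ↦ ?_) ?_) i
  · simp [hne] at hd
  · rcases eq_or_ne k i with rfl | hki <;> rcases eq_or_ne k j with rfl | hkj <;> simp_all
  · simp [sub_mul, sum_sub_distrib, Pi.single_apply, hij]

theorem eq_of_sum_mul_eq (h : NoSmallRelation B p) {c a : ι → ℕ} (hc : ∀ i, c i ≤ B)
    (ha : ∀ i, a i ≤ B) (hca : ∑ i, (c i : ℤ) * p i = ∑ i, (a i : ℤ) * p i) : c = a := by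
  have hd := h (fun i ↦ c i - a i) (fun i ↦ abs_sub_le_iff.mpr ⟨by grind, by grind⟩)
    (by simp only [sub_mul, sum_sub_distrib, hca, sub_self])
  funext i
  simpa only [Pi.zero_apply, sub_eq_zero, Nat.cast_inj] using congrFun hd i

end NoSmallRelation

noncomputable def relationValues {ι : Type*} [Fintype ι] [DecidableEq ι] (B : ℕ) (p : ι → ℤ) :
    Finset ℤ :=
  ((Fintype.piFinset fun _ : ι ↦ Icc (-(B : ℤ)) B) ×ˢ Icc (-(B : ℤ)) B).image
    fun de ↦ -(∑ i, de.1 i * p i) / de.2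

section relationValues

variable {ι : Type*} [Fintype ι] [DecidableEq ι] {B : ℕ} {p : ι → ℤ}

theorem card_relationValues_le :
    #(relationValues B p) ≤ (2 * B + 1) ^ (Fintype.card ι + 1) := by
  have hIcc : #(Icc (-(B : ℤ)) B) = 2 * B + 1 := by rw [Int.card_Icc]; omega
  grw [relationValues, card_image_le]
  simp [card_product, Fintype.card_piFinset, hIcc, pow_succ]

theorem mem_relationValues {d : ι → ℤ} {e q : ℤ} (hd : ∀ i, |d i| ≤ B) (he : |e| ≤ B)
    (he0 : e ≠ 0) (hrel : ∑ i, d i * p i + e * q = 0) : q ∈ relationValues B p := by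
  refine mem_image.mpr ⟨(d, e), mem_product.mpr ⟨Fintype.mem_piFinset.mpr fun i ↦
    mem_Icc.mpr (abs_le.mp (hd i)), mem_Icc.mpr (abs_le.mp he)⟩, ?_⟩
  rw [show -∑ i, d i * p i = e * q by linarith, Int.mul_ediv_cancel_left _ he0]

end relationValues

theorem NoSmallRelation.snoc {k B : ℕ} {p : Fin k → ℤ} {q : ℤ} (h : NoSmallRelation B p)
    (hq : q ∉ relationValues B p) : NoSmallRelation B (Fin.snoc p q : Fin (k + 1) → ℤ) := by
  intro d hd hrel
  rw [Fin.sum_univ_castSucc] at hrel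
  simp only [Fin.snoc_castSucc, Fin.snoc_last] at hrel
  by_cases hlast : d (Fin.last k) = 0
  · rw [hlast, zero_mul, add_zero] at hrel
    have hinit := h _ (fun i ↦ hd _) hrel
    funext i
    exact Fin.lastCases hlast (fun j ↦ congrFun hinit j) i
  · exact absurd (mem_relationValues (fun i ↦ hd _) (hd _) hlast hrel) hq

theorem exists_noSmallRelation (B : ℕ) (W : Finset ℕ) :
    ∀ n, (2 * B + 1) ^ n < #W → ∃ m : Fin n → ℕ, (∀ i, m i ∈ W) ∧
      NoSmallRelation B fun i ↦ (m i : ℤ)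
  | 0, _ => ⟨Fin.elim0, fun i ↦ i.elim0, fun _ _ _ ↦ funext fun i ↦ i.elim0⟩
  | n + 1, hW => by
    obtain ⟨m, hmW, hm⟩ := exists_noSmallRelation B W n
      (lt_of_le_of_lt (Nat.pow_le_pow_right (by omega) n.le_succ) hW)
    have hcard : #(relationValues B fun i ↦ (m i : ℤ)) < #(W.image ((↑) : ℕ → ℤ)) := by
      grw [card_image_of_injective _ Nat.cast_injective, card_relationValues_le]
      simpa using hW
    obtain ⟨_, hqW, hq⟩ := exists_mem_notMem_of_card_lt_card hcard
    obtain ⟨q, hqW, rfl⟩ := mem_image.mp hqW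
    refine ⟨Fin.snoc m q, Fin.lastCases (by simpa using hqW) (by simpa using hmW), ?_⟩
    rw [← Function.comp_def, Fin.comp_snoc]
    exact hm.snoc hq

theorem exists_prime_weights_unique_representation_general
    (n : ℕ) (a : Fin n → ℕ) :
    ∃ m : Fin n → ℕ, (∀ i, Nat.Prime (m i)) ∧ Function.Injective m ∧
      ∀ c : Fin n → ℕ, ∑ i, c i * m i = ∑ i, a i * m i → c = a := by
  -- the `+ 1` makes `B ≥ 1`, so that a tuple without `B`-bounded relations is injective
  set B := 2 * ∑ i, a i + 1
  obtain ⟨N, hN⟩ := exists_primeCounting_add_le_primeCounting_two_mul ((2 * B + 1) ^ n + 1)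
  have hW : (2 * B + 1) ^ n < #(Nat.primesLE (2 * N) \ Nat.primesLE N) := by
    rw [card_sdiff_of_subset (Nat.primesLE_mono (by omega)), Nat.primesLE_card_eq_primeCounting,
      Nat.primesLE_card_eq_primeCounting]
    omega
  obtain ⟨m, hmW, hm⟩ := exists_noSmallRelation B _ n hW
  have hwindow i := mem_primesLE_sdiff_primesLE.mp (hmW i)
  refine ⟨m, fun i ↦ (hwindow i).1, fun i j hij ↦ hm.injective (by omega) (congrArg _ hij), ?_⟩
  intro c hc
  have hcB i : c i ≤ B :=
    (le_two_mul_sum_of_sum_mul_eq (fun j ↦ (hwindow j).2.1) (fun j ↦ (hwindow j).2.2) hc i).trans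
      (Nat.le_succ _)
  have haB i : a i ≤ B := (single_le_sum (by simp) (mem_univ i)).trans (by omega)
  exact hm.eq_of_sum_mul_eq hcB haB (by exact_mod_cast hc)

/-- Remark 3 of the paper. For positive integers `a₁, …, aₙ` there exist
pairwise distinct primes `m₁, …, mₙ` such that the only `c ∈ ℕⁿ` with
`∑ cᵢ mᵢ = ∑ aᵢ mᵢ` is `c = a`. -/
theorem exists_prime_weights_unique_representation
    (n : ℕ) (a : Fin n → ℕ) (ha : ∀ i, 0 < a i) :
    ∃ m : Fin n → ℕ, (∀ i, Nat.Prime (m i)) ∧ Function.Injective m ∧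
      ∀ c : Fin n → ℕ, ∑ i, c i * m i = ∑ i, a i * m i → c = a :=
  exists_prime_weights_unique_representation_general n a
end

section
/- Let a = (a₁,…,aₙ) ∈ ℕⁿ and let s₁,…,sₙ be positive real numbers that are linearly independent over ℚ. Then there exists ε > 0 such that for every s' = (s'₁,…,s'ₙ) with each s'ᵢ > 0 and |s'ᵢ − sᵢ| < ε for all i, the only c ∈ ℕⁿ with Σᵢ cᵢs'ᵢ = Σᵢ aᵢs'ᵢ is c = a. -/
/-!
Over `ℕ` the weights `s` give distinct values `∑ cᵢ sᵢ` to distinct `c`. Near `s` the weights stay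
above `sᵢ / 2` and `∑ aᵢ s'ᵢ` stays below `∑ aᵢ sᵢ + 1`, which confines every competitor `c` of
`a` to a finite box. Each of the finitely many inequalities `∑ cᵢ sᵢ ≠ ∑ aᵢ sᵢ` in the box is an
open condition, so all of them persist on a common neighbourhood of `s`.
-/

open Filter Topology

section

variable {ι : Type*} [Fintype ι]

theorem LinearIndependent.natCast_sum_mul_injective {s : ι → ℝ} (hind : LinearIndependent ℚ s) :
    Function.Injective fun c : ι → ℕ => ∑ i, (c i : ℝ) * s i := by
  intro c a h
  simp only [← nsmul_eq_mul] at h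
  exact funext (Fintype.linearIndependent_iffₛ.mp (hind.restrict_scalars' ℕ) c a h)

theorem finite_setOf_natCast_le (B : ι → ℝ) : {c : ι → ℕ | ∀ i, (c i : ℝ) ≤ B i}.Finite := by
  refine (Set.Finite.pi fun i => Set.finite_Iic ⌊B i⌋₊).subset fun c hc i _ => ?_
  exact Nat.le_floor (hc i)

theorem eventually_nhds_sum_mul_eq_imp_eq {s : ι → ℝ} (hs : ∀ i, 0 < s i)
    (hind : LinearIndependent ℚ s) (a : ι → ℕ) :
    ∀ᶠ s' in 𝓝 s, ∀ c : ι → ℕ, ∑ i, (c i : ℝ) * s' i = ∑ i, (a i : ℝ) * s' i → c = a := by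
  set T := ∑ i, (a i : ℝ) * s i
  set box := {c : ι → ℕ | ∀ i, (c i : ℝ) ≤ 2 * (T + 1) / s i}
  have hcont (c : ι → ℕ) : Continuous fun s' : ι → ℝ => ∑ i, (c i : ℝ) * s' i := by fun_prop
  have hhalf : ∀ᶠ s' in 𝓝 s, ∀ i, s i / 2 < s' i := eventually_all.2 fun i =>
    ((continuous_apply i).tendsto s).eventually_const_lt (half_lt_self (hs i))
  have hsum : ∀ᶠ s' in 𝓝 s, ∑ i, (a i : ℝ) * s' i < T + 1 :=
    ((hcont a).tendsto s).eventually_lt_const (lt_add_one T)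
  have hsep : ∀ᶠ s' in 𝓝 s, ∀ c ∈ box, c ≠ a →
      ∑ i, (c i : ℝ) * s' i ≠ ∑ i, (a i : ℝ) * s' i :=
    (finite_setOf_natCast_le _).eventually_all.2 fun c _ => eventually_imp_distrib_left.2 fun hca =>
      ((hcont c).continuousAt.ne_iff_eventually_ne (hcont a).continuousAt).1
        (hind.natCast_sum_mul_injective.ne hca)
  filter_upwards [hhalf, hsum, hsep] with s' hhalf hsum hsep c hc
  by_contra hca
  refine hsep c (fun i => ?_) hca hc
  have hci : (c i : ℝ) * s' i < T + 1 := calc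
    (c i : ℝ) * s' i ≤ ∑ j, (c j : ℝ) * s' j :=
      Finset.single_le_sum (f := fun j => (c j : ℝ) * s' j)
        (fun j _ => mul_nonneg (c j).cast_nonneg ((half_pos (hs j)).trans (hhalf j)).le)
        (Finset.mem_univ i)
    _ < T + 1 := hc ▸ hsum
  rw [le_div_iff₀ (hs i)]
  nlinarith [hhalf i, (c i).cast_nonneg (α := ℝ)]

end

/-- stability claim in Remark 3 of the paper. If `s₁, …, sₙ` are positive
reals, linearly independent over `ℚ`, and `a ∈ ℕⁿ`, then for every sufficiently small
perturbation `s'` of `s` with positive entries, the only `c ∈ ℕⁿ` with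
`∑ cᵢ s'ᵢ = ∑ aᵢ s'ᵢ` is `c = a`. -/
theorem unique_representation_stable_under_perturbation
    (n : ℕ) (a : Fin n → ℕ) (s : Fin n → ℝ)
    (hs : ∀ i, 0 < s i) (hind : LinearIndependent ℚ s) :
    ∃ ε > (0 : ℝ), ∀ s' : Fin n → ℝ, (∀ i, 0 < s' i) → (∀ i, |s' i - s i| < ε) →
      ∀ c : Fin n → ℕ, ∑ i, (c i : ℝ) * s' i = ∑ i, (a i : ℝ) * s' i → c = a := by
  obtain ⟨ε, hε, hball⟩ :=
    Metric.eventually_nhds_iff.mp (eventually_nhds_sum_mul_eq_imp_eq hs hind a)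
  refine ⟨ε, hε, fun s' _ hclose => hball ?_⟩
  rw [dist_pi_lt_iff hε]
  simpa only [Real.dist_eq] using hclose
end

section
/- Let K be a field and J ⊆ K[x₁,…,xₙ] a nonzero ideal generated by monomials. Then there exists a finite composite σ̄ of elementary monomial substitutions on K[x₁,…,xₙ] such that the ideal of K[x₁,…,xₙ] generated by σ̄(J) is a principal ideal generated by a single monomial. -/
/-- An elementary monomial substitution on `K[x₁,…,xₙ]`: the `K`-algebra endomorphism
induced either by a permutation of the variables, or (for `r` with 1-based index
`1 < r ≤ n`, i.e. `0 < (r : ℕ)` in 0-based indexing) by `xᵢ ↦ xᵢxᵣ` for `i < r` and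
`xᵢ ↦ xᵢ` for `i ≥ r`. -/
def IsElemMonomialSubstPoly {K : Type*} [CommSemiring K] {n : ℕ}
    (σ : MvPolynomial (Fin n) K →ₐ[K] MvPolynomial (Fin n) K) : Prop :=
  (∃ e : Equiv.Perm (Fin n), σ = MvPolynomial.rename e) ∨
  (∃ r : Fin n, 0 < (r : ℕ) ∧ σ = MvPolynomial.aeval
    (fun i => if i < r then MvPolynomial.X i * MvPolynomial.X r else MvPolynomial.X i))

/-!
A monomial substitution acts on exponent vectors by an additive, hence monotone, map `T`,
with `σ (x^d) = x^(T d)`. By Noetherianity finitely many monomials generate `J`, so it suffices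
to make the exponent of one generator divide all the others after a composite substitution,
and by induction on the number of generators it suffices to make two exponents `a`, `b`
comparable. If they are not, pick `i` with `aᵢ > bᵢ` and `j` with `aⱼ < bⱼ`; substituting
`xᵢ ↦ xᵢxⱼ` (or `xⱼ ↦ xⱼxᵢ`, whichever excess is smaller) strictly lowers the `ℓ¹`-distance
of `a` and `b`, and this substitution is a conjugate of `x₁ ↦ x₁x₂` by a permutation.
-/

theorem AddMonoidHom.monotone_of_canonicallyOrderedAdd {M N : Type*} [AddMonoid M] [Preorder M]
    [ExistsAddOfLE M] [AddMonoid N] [Preorder N] [CanonicallyOrderedAdd N] (f : M →+ N) :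
    Monotone f := by
  intro a b hab
  obtain ⟨c, rfl⟩ := exists_add_of_le hab
  simp

namespace MonomialPrincipalization

open MvPolynomial Finset

variable {n : ℕ}

noncomputable def expPerm (π : Equiv.Perm (Fin n)) : AddMonoid.End (Fin n →₀ ℕ) :=
  (Finsupp.domCongr π).toAddMonoidHom

noncomputable def expElem (r : Fin n) : AddMonoid.End (Fin n →₀ ℕ) :=
  { toFun d := d + Finsupp.single r (∑ i ∈ univ.filter (· < r), d i)
    map_zero' := by simp
    map_add' a b := by
      simp only [Finsupp.coe_add, Pi.add_apply, sum_add_distrib, Finsupp.single_add]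
      exact add_add_add_comm _ _ _ _ }

noncomputable def expMove (i j : Fin n) : AddMonoid.End (Fin n →₀ ℕ) :=
  { toFun d := d + Finsupp.single j (d i)
    map_zero' := by simp
    map_add' a b := by
      simp only [Finsupp.coe_add, Pi.add_apply, Finsupp.single_add]
      exact add_add_add_comm _ _ _ _ }

theorem expPerm_apply (π : Equiv.Perm (Fin n)) (d : Fin n →₀ ℕ) (k : Fin n) :
    expPerm π d k = d (π.symm k) := rfl

theorem expElem_apply (r : Fin n) (d : Fin n →₀ ℕ) :
    expElem r d = d + Finsupp.single r (∑ i ∈ univ.filter (· < r), d i) := rfl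

theorem expMove_apply (i j : Fin n) (d : Fin n →₀ ℕ) :
    expMove i j d = d + Finsupp.single j (d i) := rfl

def expElems (n : ℕ) : Set (AddMonoid.End (Fin n →₀ ℕ)) :=
  Set.range expPerm ∪ {T | ∃ r : Fin n, 0 < (r : ℕ) ∧ T = expElem r}

theorem exists_perm_apply_zero_one {m : ℕ} {i j : Fin (m + 2)} (hij : i ≠ j) :
    ∃ π : Equiv.Perm (Fin (m + 2)), π 0 = i ∧ π 1 = j := by
  refine ⟨Equiv.swap 0 i * Equiv.swap 1 (Equiv.swap 0 i j), ?_, by simp⟩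
  have h : Equiv.swap 0 i j ≠ 0 := by simpa [Equiv.swap_apply_eq_iff] using hij.symm
  simp [Equiv.swap_apply_of_ne_of_ne (by simp : (0 : Fin (m + 2)) ≠ 1) h.symm]

theorem expMove_mem_closure {i j : Fin n} (hij : i ≠ j) :
    expMove i j ∈ Submonoid.closure (expElems n) := by
  obtain ⟨m, rfl⟩ : ∃ m, n = m + 2 := ⟨n - 2, by omega⟩
  obtain ⟨π, hπ0, hπ1⟩ := exists_perm_apply_zero_one hij
  have hconj : expMove i j = expPerm π * expElem 1 * expPerm π⁻¹ := by
    ext d k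
    have hfilt : univ.filter (· < (1 : Fin (m + 2))) = {0} := by ext; simp [Fin.lt_one_iff]
    simp only [expMove_apply, AddMonoid.End.coe_mul, Function.comp_apply, expElem_apply, hfilt,
      sum_singleton, Finsupp.add_apply, expPerm_apply, Finsupp.single_apply, Equiv.Perm.inv_def,
      Equiv.symm_symm, Equiv.apply_symm_apply, hπ0, ← hπ1, Equiv.eq_symm_apply]
  rw [hconj]
  refine mul_mem (mul_mem ?_ ?_) ?_ <;> apply Submonoid.subset_closure
  · exact Or.inl ⟨π, rfl⟩
  · exact Or.inr ⟨1, by simp, rfl⟩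
  · exact Or.inl ⟨π⁻¹, rfl⟩

def expDist (a b : Fin n →₀ ℕ) : ℕ := ∑ k, Nat.dist (a k) (b k)

theorem expDist_expMove_lt {a b : Fin n →₀ ℕ} {i j : Fin n}
    (h : Nat.dist (a j + a i) (b j + b i) < Nat.dist (a j) (b j)) :
    expDist (expMove i j a) (expMove i j b) < expDist a b := by
  refine sum_lt_sum (fun k _ => ?_) ⟨j, mem_univ j, by simpa [expMove_apply] using h⟩
  rcases eq_or_ne k j with rfl | hk
  · simpa [expMove_apply] using h.le
  · simp [expMove_apply, hk.symm]

theorem exists_mem_closure_le_or_le (a b : Fin n →₀ ℕ) :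
    ∃ T ∈ Submonoid.closure (expElems n), T a ≤ T b ∨ T b ≤ T a := by
  induction h : expDist a b using Nat.strong_induction_on generalizing a b with
  | _ N ih =>
  by_cases hab : a ≤ b
  · exact ⟨1, one_mem _, Or.inl hab⟩
  by_cases hba : b ≤ a
  · exact ⟨1, one_mem _, Or.inr hba⟩
  obtain ⟨i, hi⟩ : ∃ i, b i < a i := by simpa [Finsupp.le_def] using hab
  obtain ⟨j, hj⟩ : ∃ j, a j < b j := by simpa [Finsupp.le_def] using hba
  have hij : i ≠ j := by rintro rfl; omega
  obtain ⟨p, q, hpq, hlt⟩ :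
      ∃ p q, p ≠ q ∧ expDist (expMove p q a) (expMove p q b) < expDist a b := by
    rcases le_total (a i - b i) (b j - a j) with h | h
    · exact ⟨i, j, hij, expDist_expMove_lt (by unfold Nat.dist; omega)⟩
    · exact ⟨j, i, hij.symm, expDist_expMove_lt (by unfold Nat.dist; omega)⟩
  obtain ⟨T, hT, hcmp⟩ := ih _ (h ▸ hlt) _ _ rfl
  exact ⟨T * expMove p q, mul_mem hT (expMove_mem_closure hpq), hcmp⟩

theorem exists_mem_closure_forall_le {E : Finset (Fin n →₀ ℕ)} (hE : E.Nonempty) :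
    ∃ T ∈ Submonoid.closure (expElems n), ∃ g ∈ E, ∀ d ∈ E, T g ≤ T d := by
  induction hE using Finset.Nonempty.cons_induction with
  | singleton a => exact ⟨1, one_mem _, a, mem_singleton_self a, by simp⟩
  | cons a E ha hE ih =>
    obtain ⟨T, hT, g, hg, hmin⟩ := ih
    obtain ⟨U, hU, hcmp⟩ := exists_mem_closure_le_or_le (T g) (T a)
    have hUmono : Monotone U := AddMonoidHom.monotone_of_canonicallyOrderedAdd U
    rcases hcmp with hcmp | hcmp
    · refine ⟨U * T, mul_mem hU hT, g, mem_cons_of_mem hg, ?_⟩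
      exact (forall_mem_cons _ _).2 ⟨hcmp, fun d hd => hUmono (hmin d hd)⟩
    · refine ⟨U * T, mul_mem hU hT, a, mem_cons_self a E, ?_⟩
      exact (forall_mem_cons _ _).2 ⟨le_rfl, fun d hd => hcmp.trans (hUmono (hmin d hd))⟩

theorem map_monomial_of_map_X {ι κ K : Type*} [CommSemiring K]
    (σ : MvPolynomial ι K →ₐ[K] MvPolynomial κ K) (T : (ι →₀ ℕ) →+ (κ →₀ ℕ))
    (hX : ∀ i, σ (X i) = monomial (T (Finsupp.single i 1)) 1) (d : ι →₀ ℕ) :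
    σ (monomial d 1) = monomial (T d) 1 := by
  induction d using Finsupp.induction with
  | zero => simp
  | single_add i k d _ _ ih =>
    rw [← mul_one (1 : K), ← monomial_mul, map_mul, ih, ← X_pow_eq_monomial, map_pow, hX,
      monomial_pow, one_pow, monomial_mul, one_mul, ← map_nsmul, Finsupp.smul_single_one, map_add]

theorem exists_mem_closure_map_monomial {K : Type*} [CommSemiring K]
    {T : AddMonoid.End (Fin n →₀ ℕ)} (hT : T ∈ Submonoid.closure (expElems n)) :
    ∃ σ ∈ Submonoid.closure {σ : MvPolynomial (Fin n) K →ₐ[K] MvPolynomial (Fin n) K |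
      IsElemMonomialSubstPoly σ}, ∀ d, σ (monomial d 1) = monomial (T d) 1 := by
  induction hT using Submonoid.closure_induction with
  | mem T hT =>
    rcases hT with ⟨π, rfl⟩ | ⟨r, hr, rfl⟩
    · refine ⟨rename π, Submonoid.subset_closure (Or.inl ⟨π, rfl⟩),
        map_monomial_of_map_X _ _ fun i => ?_⟩
      simp only [rename_X, expPerm, AddEquiv.coe_toAddMonoidHom, Finsupp.domCongr_apply,
        Finsupp.equivMapDomain_single]
      rfl
    · refine ⟨_, Submonoid.subset_closure (Or.inr ⟨r, hr, rfl⟩),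
        map_monomial_of_map_X _ _ fun i => ?_⟩
      -- back from the `→+` coercion to the `AddMonoid.End` one, in which `expElem_apply` is stated
      change _ = monomial (expElem r (Finsupp.single i 1)) 1
      rw [aeval_X, expElem_apply]
      split_ifs with h <;> simp [Finsupp.single_apply, X, monomial_mul, h]
  | one => exact ⟨1, one_mem _, fun d => rfl⟩
  | mul T U _ _ hT hU =>
    obtain ⟨σ, hσ, hσT⟩ := hT
    obtain ⟨τ, hτ, hτU⟩ := hU
    exact ⟨σ * τ, mul_mem hσ hτ, fun d => by simp [AlgHom.mul_apply, hτU, hσT]⟩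

theorem span_monomial_image_eq_span_singleton {ι R : Type*} [CommSemiring R]
    {E : Set (ι →₀ ℕ)} {g : ι →₀ ℕ} (hg : g ∈ E) (hmin : ∀ d ∈ E, g ≤ d) :
    Ideal.span ((fun e => monomial e (1 : R)) '' E) = Ideal.span {monomial g 1} := by
  refine le_antisymm (Ideal.span_le.2 ?_) (Ideal.span_mono (by simpa using ⟨g, hg, rfl⟩))
  rintro _ ⟨d, hd, rfl⟩
  refine Ideal.mem_span_singleton.2 ⟨monomial (d - g) 1, ?_⟩
  rw [monomial_mul, one_mul, add_tsub_cancel_of_le (hmin d hd)]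

theorem exists_finset_span_image_eq {ι R : Type*} [CommSemiring R] [IsNoetherianRing R]
    (f : ι → R) (S : Set ι) :
    ∃ E : Finset ι, ↑E ⊆ S ∧ Ideal.span (f '' S) = Ideal.span (f '' E) := by
  classical
  obtain ⟨t, htS, ht⟩ :=
    (Submodule.fg_span_iff_fg_span_finset_subset (f '' S)).1 (IsNoetherian.noetherian (R := R) _)
  obtain ⟨E, hES, rfl⟩ := Finset.subset_set_image_iff.1 htS
  exact ⟨E, hES, by simpa using ht⟩

end MonomialPrincipalization

open MonomialPrincipalization MvPolynomial in
/-- Theorem 9 of the paper: monomial principalization of monomial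
ideals, over an arbitrary field. If `J ⊆ K[x₁,…,xₙ]` is a nonzero ideal generated by
monomials, then there is a finite composite `σ̄` of elementary monomial substitutions such
that the ideal generated by `σ̄(J)` is principal, generated by a single monomial. -/
theorem monomial_principalization_of_monomial_ideal
    {K : Type*} [Field K] (n : ℕ) (J : Ideal (MvPolynomial (Fin n) K))
    (hJ : ∃ S : Set (Fin n →₀ ℕ),
      J = Ideal.span ((fun e => MvPolynomial.monomial e (1 : K)) '' S))
    (hJ0 : J ≠ ⊥) :
    ∃ L : List (MvPolynomial (Fin n) K →ₐ[K] MvPolynomial (Fin n) K),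
      (∀ σ ∈ L, IsElemMonomialSubstPoly σ) ∧
      ∃ e : Fin n →₀ ℕ,
        Ideal.map (L.foldr (fun f g => f.comp g) (AlgHom.id K _)) J
          = Ideal.span {MvPolynomial.monomial e (1 : K)} := by
  obtain ⟨S, rfl⟩ := hJ
  obtain ⟨E, -, hSE⟩ := exists_finset_span_image_eq (fun e => monomial e (1 : K)) S
  have hE : E.Nonempty := by
    rw [Finset.nonempty_iff_ne_empty]
    rintro rfl
    simp [hSE] at hJ0
  obtain ⟨T, hT, g, hg, hmin⟩ := exists_mem_closure_forall_le hE
  obtain ⟨σ, hσ, hσT⟩ := exists_mem_closure_map_monomial (K := K) hT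
  obtain ⟨L, hL, rfl⟩ := Submonoid.exists_list_of_mem_closure hσ
  refine ⟨L, hL, T g, ?_⟩
  have hfold : L.foldr (fun f g => f.comp g) (AlgHom.id K _) = L.prod := List.prod_eq_foldr.symm
  rw [hfold, hSE, Ideal.map_span, Set.image_image]
  simp only [hσT]
  rw [← Set.image_image (fun e => monomial e (1 : K)) T]
  exact span_monomial_image_eq_span_singleton (Set.mem_image_of_mem T hg)
    (Set.forall_mem_image.2 hmin)
end

section
/- Let g, h ∈ ℂ[x,y] be irreducible polynomials with deg g = d, deg h = n, d < n, and g(0,0) = 0. Let R = ℂ[x,y]/(g), let 𝔪 be the maximal ideal of R generated by the images of x and y, and let R_𝔪 be the localization of R at 𝔪. Then for all i, j ∈ ℕ with i + j > n·d, the image of xⁱyʲ in R_𝔪 lies in the ideal of R_𝔪 generated by the image of h. -/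
/-!
Weak Bézout bound. For every `t`, the map `(p, q) ↦ p g + q h` from polynomials of degrees
`≤ n + t` and `≤ d + t` to polynomials of degree `≤ d + n + t` has kernel `{(c h, -c g)}` with
`deg c ≤ t`, since `g` and `h` are coprime; counting monomials, its cokernel has dimension
exactly `n d`. These cokernels surject onto subspaces exhausting `A = ℂ[x,y]/(g,h) ≅ R/(h̄)`, so
`dim A ≤ n d`.

In a finite-dimensional algebra the powers of an ideal `I` stabilise after at most `dim A` steps,
and Nakayama's lemma then gives `r ≡ 1 mod I` killing `I ^ dim A`. For `I` the image of `𝔪` in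
`A` (when `h ∈ 𝔪`; otherwise `h` itself is the denominator), `r` lifts to `u ∉ 𝔪` with
`u xⁱ yʲ ∈ (h̄)`, as `xⁱ yʲ ∈ 𝔪 ^ (i + j) ⊆ 𝔪 ^ (n d)`.
-/

open MvPolynomial Module

theorem two_mul_card_setOf_add_le (t : ℕ) :
    2 * Nat.card {p : ℕ × ℕ | p.1 + p.2 ≤ t} = (t + 1) * (t + 2) := by
  rw [show {p : ℕ × ℕ | p.1 + p.2 ≤ t} =
      ↑((Finset.range (t + 1)).biUnion Finset.HasAntidiagonal.antidiagonal) by ext; simp,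
    Nat.card_coe_set_eq, Set.ncard_coe_finset,
    Finset.card_biUnion fun a _ b _ hab => Finset.disjoint_left.2 fun p ha hb => hab <|
      (Finset.HasAntidiagonal.mem_antidiagonal.1 ha).symm.trans
        (Finset.HasAntidiagonal.mem_antidiagonal.1 hb)]
  simp only [Finset.Nat.card_antidiagonal]
  induction t with
  | zero => simp
  | succ t ih => rw [Finset.sum_range_succ, mul_add, ih]; ring

theorem Nat.exists_le_apply_zero_succ_eq_of_antitone {f : ℕ → ℕ} (hf : Antitone f) :
    ∃ k ≤ f 0, f (k + 1) = f k := by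
  by_contra! hne
  have hdrop : ∀ k ≤ f 0 + 1, f k + k ≤ f 0 := by
    intro k
    induction k with
    | zero => simp
    | succ k ih =>
      intro hk
      have := (hf (Nat.le_add_right k 1)).lt_of_ne (hne k (by omega))
      have := ih (by omega)
      omega
  have := hdrop (f 0 + 1) le_rfl
  omega

namespace MvPolynomial

theorem two_mul_finrank_restrictTotalDegree_fin_two (K : Type*) [Field K] (t : ℕ) :
    2 * finrank K (restrictTotalDegree (Fin 2) K t) = (t + 1) * (t + 2) := by
  rw [restrictTotalDegree, finrank_eq_nat_card_basis (basisRestrictSupport K _),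
    ← two_mul_card_setOf_add_le t]
  congr 1
  refine Nat.card_congr (Equiv.subtypeEquiv (Finsupp.equivFunOnFinite.trans (finTwoArrowEquiv ℕ))
    fun s => ?_)
  simp [Finsupp.sum_fintype, Fin.sum_univ_two]

section CommSemiring

variable {σ R : Type*} [CommSemiring R]

theorem mul_mem_restrictTotalDegree {p q : MvPolynomial σ R} {a b : ℕ}
    (hp : p ∈ restrictTotalDegree σ R a) (hq : q ∈ restrictTotalDegree σ R b) :
    p * q ∈ restrictTotalDegree σ R (a + b) := by
  rw [mem_restrictTotalDegree] at *
  exact (totalDegree_mul p q).trans (add_le_add hp hq)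

theorem self_mem_restrictTotalDegree (p : MvPolynomial σ R) :
    p ∈ restrictTotalDegree σ R p.totalDegree :=
  (mem_restrictTotalDegree _ _ p).2 le_rfl

end CommSemiring

section CommRing

variable {σ R : Type*} [CommRing R] (g h : MvPolynomial σ R) (t : ℕ)

noncomputable def sylvesterMap :
    restrictTotalDegree σ R (h.totalDegree + t) × restrictTotalDegree σ R (g.totalDegree + t)
      →ₗ[R] restrictTotalDegree σ R (g.totalDegree + h.totalDegree + t) :=
  LinearMap.codRestrict _
    ((LinearMap.mulRight R g ∘ₗ Submodule.subtype _).coprod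
      (LinearMap.mulRight R h ∘ₗ Submodule.subtype _))
    fun x => by
      refine Submodule.add_mem _ ?_ ?_
      · simpa [add_comm, add_assoc, add_left_comm] using
          mul_mem_restrictTotalDegree x.1.2 (self_mem_restrictTotalDegree g)
      · simpa [add_comm, add_assoc, add_left_comm] using
          mul_mem_restrictTotalDegree x.2.2 (self_mem_restrictTotalDegree h)

@[simp]
theorem coe_sylvesterMap_apply (x) :
    (sylvesterMap g h t x : MvPolynomial σ R) = x.1 * g + x.2 * h := rfl

noncomputable def syzygyMap :
    restrictTotalDegree σ R t →ₗ[R]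
      restrictTotalDegree σ R (h.totalDegree + t) × restrictTotalDegree σ R (g.totalDegree + t) :=
  (LinearMap.codRestrict _ (LinearMap.mulLeft R h ∘ₗ Submodule.subtype _)
      fun c => mul_mem_restrictTotalDegree (self_mem_restrictTotalDegree h) c.2).prod
    (LinearMap.codRestrict _ (-LinearMap.mulLeft R g ∘ₗ Submodule.subtype _)
      fun c => Submodule.neg_mem _ <|
        mul_mem_restrictTotalDegree (self_mem_restrictTotalDegree g) c.2)

@[simp]
theorem coe_syzygyMap_apply_fst (c) : ((syzygyMap g h t c).1 : MvPolynomial σ R) = h * c :=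
  rfl

@[simp]
theorem coe_syzygyMap_apply_snd (c) : ((syzygyMap g h t c).2 : MvPolynomial σ R) = -(g * c) :=
  rfl

end CommRing

variable {σ K : Type*} [Field K] {g h : MvPolynomial σ K} {t : ℕ}

theorem syzygyMap_injective (hh : h ≠ 0) : Function.Injective (syzygyMap g h t) :=
  fun _ _ hc => Subtype.ext <| mul_left_cancel₀ hh <|
    congrArg (fun x => (x.1 : MvPolynomial σ K)) hc

theorem range_syzygyMap (hgh : IsRelPrime g h) (hh : h ≠ 0) :
    LinearMap.range (syzygyMap g h t) = LinearMap.ker (sylvesterMap g h t) := by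
  refine le_antisymm ?_ fun ⟨p, q⟩ hpq => ?_
  · rintro _ ⟨c, rfl⟩
    refine Subtype.ext ?_
    simp only [coe_sylvesterMap_apply, coe_syzygyMap_apply_fst, coe_syzygyMap_apply_snd,
      ZeroMemClass.coe_zero]
    ring
  have hpq : (p : MvPolynomial σ K) * g + q * h = 0 := congrArg Subtype.val hpq
  obtain ⟨c, hc⟩ : h ∣ (p : MvPolynomial σ K) :=
    hgh.symm.dvd_of_dvd_mul_right ⟨-q, by linear_combination hpq⟩
  have hq : (q : MvPolynomial σ K) = -(g * c) :=
    mul_left_cancel₀ hh (by linear_combination hpq - g * hc)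
  have hct : c ∈ restrictTotalDegree σ K t := by
    rcases eq_or_ne c 0 with rfl | hc0
    · exact Submodule.zero_mem _
    have := (mem_restrictTotalDegree _ _ _).1 p.2
    rw [hc, totalDegree_mul_of_isDomain hh hc0] at this
    exact (mem_restrictTotalDegree _ _ c).2 (by omega)
  exact ⟨⟨c, hct⟩, Prod.ext (Subtype.ext hc.symm) (Subtype.ext hq.symm)⟩

theorem finrank_range_sylvesterMap_add [Finite σ] (hgh : IsRelPrime g h) (hh : h ≠ 0) :
    finrank K (LinearMap.range (sylvesterMap g h t)) + finrank K (restrictTotalDegree σ K t) =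
      finrank K (restrictTotalDegree σ K (h.totalDegree + t)) +
        finrank K (restrictTotalDegree σ K (g.totalDegree + t)) := by
  rw [← finrank_prod (M := restrictTotalDegree σ K (h.totalDegree + t)),
    ← (sylvesterMap g h t).finrank_range_add_finrank_ker, ← range_syzygyMap hgh hh,
    LinearMap.finrank_range_of_inj (syzygyMap_injective hh)]

end MvPolynomial

section Bezout

variable {K : Type*} [Field K] {g h : MvPolynomial (Fin 2) K}

theorem finrank_map_mk_restrictTotalDegree_le (hgh : IsRelPrime g h) (hh : h ≠ 0) (t : ℕ) :
    finrank K ((restrictTotalDegree (Fin 2) K (g.totalDegree + h.totalDegree + t)).map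
      (Ideal.Quotient.mkₐ K (Ideal.span {g, h})).toLinearMap) ≤
        g.totalDegree * h.totalDegree := by
  set L := (Ideal.Quotient.mkₐ K (Ideal.span {g, h})).toLinearMap ∘ₗ
    (restrictTotalDegree (Fin 2) K (g.totalDegree + h.totalDegree + t)).subtype
  have hsyl : LinearMap.range (sylvesterMap g h t) ≤ LinearMap.ker L := by
    rintro _ ⟨x, rfl⟩
    exact Ideal.Quotient.eq_zero_iff_mem.2 (Ideal.mem_span_pair.2 ⟨x.1, x.2, rfl⟩)
  have hL := L.finrank_range_add_finrank_ker
  rw [LinearMap.range_comp, Submodule.range_subtype] at hL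
  have hker := Submodule.finrank_mono hsyl
  have hrange := finrank_range_sylvesterMap_add hgh hh (t := t)
  have hD := two_mul_finrank_restrictTotalDegree_fin_two K
  have h1 := hD t
  have h2 := hD (g.totalDegree + t)
  have h3 := hD (h.totalDegree + t)
  have h4 := hD (g.totalDegree + h.totalDegree + t)
  -- `D (d + n + t) - D (n + t) - D (d + t) + D t = d n` for `D s = (s + 1) (s + 2) / 2`
  ring_nf at h1 h2 h3 h4
  linarith

theorem rank_quotient_span_pair_le (hgh : IsRelPrime g h) (hh : h ≠ 0) :
    Module.rank K (MvPolynomial (Fin 2) K ⧸ Ideal.span {g, h}) ≤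
      (g.totalDegree * h.totalDegree : ℕ) := by
  refine rank_le fun s hs => ?_
  choose p hp using fun x : MvPolynomial (Fin 2) K ⧸ Ideal.span {g, h} =>
    Ideal.Quotient.mk_surjective x
  set t := s.sup fun x => (p x).totalDegree
  have hspan : Submodule.span K (s : Set (MvPolynomial (Fin 2) K ⧸ Ideal.span {g, h})) ≤
      (restrictTotalDegree (Fin 2) K (g.totalDegree + h.totalDegree + t)).map
        (Ideal.Quotient.mkₐ K (Ideal.span {g, h})).toLinearMap :=
    Submodule.span_le.2 fun x hx => ⟨p x, (mem_restrictTotalDegree _ _ _).2 <|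
      (Finset.le_sup (f := fun x => (p x).totalDegree) hx).trans (by omega), hp x⟩
  calc s.card
      = finrank K (Submodule.span K (s : Set (MvPolynomial (Fin 2) K ⧸ Ideal.span {g, h}))) :=
        (finrank_span_finset_eq_card hs).symm
    _ ≤ _ := Submodule.finrank_mono hspan
    _ ≤ _ := finrank_map_mk_restrictTotalDegree_le hgh hh t

end Bezout

section Nakayama

variable {K A : Type*} [Field K] [CommRing A] [Algebra K A] [Module.Finite K A]

theorem Ideal.exists_le_finrank_pow_succ_eq (I : Ideal A) :
    ∃ k ≤ finrank K A, I ^ (k + 1) = I ^ k := by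
  have hanti : Antitone fun k => finrank K ((I ^ k).restrictScalars K) :=
    fun _ _ hkl => Submodule.finrank_mono (Ideal.pow_le_pow_right hkl)
  obtain ⟨k, hk, heq⟩ := Nat.exists_le_apply_zero_succ_eq_of_antitone hanti
  exact ⟨k, hk.trans (Submodule.finrank_le _), Submodule.restrictScalars_injective K A A <|
    Submodule.eq_of_le_of_finrank_eq (Ideal.pow_le_pow_right k.le_succ) heq⟩

theorem Ideal.exists_sub_one_mem_and_mul_eq_zero_of_mem_pow_finrank (I : Ideal A) :
    ∃ r, r - 1 ∈ I ∧ ∀ a ∈ I ^ finrank K A, r * a = 0 := by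
  obtain ⟨k, hk, heq⟩ := I.exists_le_finrank_pow_succ_eq (K := K)
  have : IsNoetherianRing A := isNoetherian_of_tower K inferInstance
  obtain ⟨r, hr, hr0⟩ :=
    Submodule.exists_sub_one_mem_and_smul_eq_zero_of_fg_of_le_smul I (I ^ k)
      (IsNoetherian.noetherian _) (by rw [Ideal.smul_eq_mul, ← pow_succ', heq])
  exact ⟨r, hr, fun a ha => hr0 a (Ideal.pow_le_pow_right hk ha)⟩

end Nakayama

theorem Ideal.exists_notMem_mul_mem_span_singleton_of_rank_le {K R : Type*} [Field K]
    [CommRing R] [Algebra K R] {M : Ideal R} (hM : M ≠ ⊤) {f : R} {N : ℕ}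
    (hN : Module.rank K (R ⧸ Ideal.span {f}) ≤ N) {a : R} (ha : a ∈ M ^ N) :
    ∃ u ∉ M, u * a ∈ Ideal.span {f} := by
  by_cases hfM : f ∉ M
  · exact ⟨f, hfM, Ideal.mul_mem_right _ _ (Ideal.mem_span_singleton_self f)⟩
  have : Module.Finite K (R ⧸ Ideal.span {f}) :=
    Module.rank_lt_aleph0_iff.1 (hN.trans_lt Cardinal.natCast_lt_aleph0)
  set π := Ideal.Quotient.mk (Ideal.span {f})
  obtain ⟨r, hr1, hr0⟩ :=
    (M.map π).exists_sub_one_mem_and_mul_eq_zero_of_mem_pow_finrank (K := K)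
  obtain ⟨u, rfl⟩ := Ideal.Quotient.mk_surjective r
  have hu1 : u - 1 ∈ M := by
    have : u - 1 ∈ (M.map π).comap π := by simpa using hr1
    rwa [Ideal.comap_map_of_surjective' π Ideal.Quotient.mk_surjective, Ideal.mk_ker,
      sup_eq_left.2 ((Ideal.span_singleton_le_iff_mem M).2 (not_not.1 hfM))] at this
  refine ⟨u, fun hu => hM (M.eq_top_of_isUnit_mem (by simpa using M.sub_mem hu hu1) isUnit_one),
    ?_⟩
  rw [← Ideal.Quotient.eq_zero_iff_mem, map_mul]
  refine hr0 _ (Ideal.pow_le_pow_right (finrank_le_of_rank_le hN) ?_)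
  rw [← Ideal.map_pow]
  exact Ideal.mem_map_of_mem π ha

noncomputable def Ideal.quotQuotSpanSingletonEquivQuotSpanPair (R : Type*) {A : Type*}
    [CommSemiring R] [CommRing A] [Algebra R A] (a b : A) :
    ((A ⧸ Ideal.span {a}) ⧸ Ideal.span {Ideal.Quotient.mk (Ideal.span {a}) b}) ≃ₐ[R]
      A ⧸ Ideal.span {a, b} :=
  (Ideal.quotientEquivAlgOfEq R (by rw [Ideal.map_span, Set.image_singleton]; rfl)).trans <|
    (DoubleQuot.quotQuotEquivQuotSupₐ R _ _).trans
      (Ideal.quotientEquivAlgOfEq R (Ideal.span_insert a {b}).symm)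

theorem MvPolynomial.span_mk_X_zero_X_one_ne_top {K : Type*} [Field K]
    {g : MvPolynomial (Fin 2) K} (hg : eval 0 g = 0) :
    Ideal.span {Ideal.Quotient.mk (Ideal.span {g}) (X 0), Ideal.Quotient.mk (Ideal.span {g}) (X 1)}
      ≠ ⊤ := by
  let ε := Ideal.Quotient.lift (Ideal.span {g}) (eval 0) fun p hp => by
    obtain ⟨c, rfl⟩ := Ideal.mem_span_singleton'.1 hp
    rw [map_mul, hg, mul_zero]
  have hker : Ideal.span {Ideal.Quotient.mk (Ideal.span {g}) (X 0),
      Ideal.Quotient.mk (Ideal.span {g}) (X 1)} ≤ RingHom.ker ε := by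
    simp [Ideal.span_le, Set.insert_subset_iff, ε]
  exact fun htop => RingHom.ker_ne_top ε (top_le_iff.1 (htop ▸ hker))

/-- Remark 12 of the paper. Let `g, h ∈ ℂ[x,y]` be irreducible with
`deg g = d < n = deg h` and `g(0,0) = 0`. Let `R = ℂ[x,y]/(g)` and let `𝔪` be the maximal
ideal of `R` generated by the images `x̄, ȳ` of `x, y`. If `i + j > n·d`, then the image of
`xⁱyʲ` in the localization `R_𝔪` lies in the ideal generated by the image of `h`: since
`R` is a domain and `𝔪` is prime, this says exactly that there is a denominator `u ∉ 𝔪`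
with `u·x̄ⁱȳʲ` in the ideal of `R` generated by `h̄`. -/
theorem monomial_in_localized_ideal
    (g h : MvPolynomial (Fin 2) ℂ) (hg : Irreducible g) (hh : Irreducible h)
    (d n : ℕ) (hgd : g.totalDegree = d) (hhd : h.totalDegree = n) (hdn : d < n)
    (hg0 : MvPolynomial.eval (0 : Fin 2 → ℂ) g = 0)
    (i j : ℕ) (hij : n * d < i + j) :
    ∃ u : MvPolynomial (Fin 2) ℂ ⧸ Ideal.span {g},
      u ∉ Ideal.span {Ideal.Quotient.mk (Ideal.span {g}) (MvPolynomial.X 0),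
                      Ideal.Quotient.mk (Ideal.span {g}) (MvPolynomial.X 1)} ∧
      u * ((Ideal.Quotient.mk (Ideal.span {g}) (MvPolynomial.X 0)) ^ i *
           (Ideal.Quotient.mk (Ideal.span {g}) (MvPolynomial.X 1)) ^ j)
        ∈ Ideal.span {Ideal.Quotient.mk (Ideal.span {g}) h} := by
  have hgh : IsRelPrime g h := (hh.isRelPrime_iff_not_dvd.2 fun hdvd =>
    (totalDegree_le_of_dvd_of_isDomain hdvd hg.ne_zero).not_gt (hgd ▸ hhd ▸ hdn)).symm
  have hrank : Module.rank ℂ ((MvPolynomial (Fin 2) ℂ ⧸ Ideal.span {g}) ⧸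
      Ideal.span {Ideal.Quotient.mk (Ideal.span {g}) h}) ≤ (n * d : ℕ) := by
    rw [(Ideal.quotQuotSpanSingletonEquivQuotSpanPair ℂ g h).toLinearEquiv.rank_eq, mul_comm,
      ← hgd, ← hhd]
    exact rank_quotient_span_pair_le hgh hh.ne_zero
  set x := Ideal.Quotient.mk (Ideal.span {g}) (X 0)
  set y := Ideal.Quotient.mk (Ideal.span {g}) (X 1)
  have hxy : x ^ i * y ^ j ∈ Ideal.span {x, y} ^ (i + j) := by
    rw [Ideal.IsTwoSided.pow_add]
    exact Ideal.mul_mem_mul (Ideal.pow_mem_pow (Ideal.subset_span (by simp)) i)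
      (Ideal.pow_mem_pow (Ideal.subset_span (by simp)) j)
  exact Ideal.exists_notMem_mul_mem_span_singleton_of_rank_le
    (span_mk_X_zero_X_one_ne_top hg0) hrank (Ideal.pow_le_pow_right hij.le hxy)
end

section
/- Let m, m₁, m₂ be positive integers with 2·min(m₁, m₂) ≤ m. Then there exists a formal power series g ∈ ℝ[[t]] such that (t^{2m₁} + t^{2m₂})·g = t^{m·m₁ + m·m₂} in ℝ[[t]], and the coefficient of t^k in g vanishes for every k outside the additive submonoid of ℕ generated by m₁ and m₂. That is, the power series F_m(t^{m₁}, t^{m₂}), where F_m(x,y) = x^m y^m/(x² + y²), lies in ℝ[[t^{m₁}, t^{m₂}]]. -/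
/-!
Assume `m₁ ≤ m₂` and write `m₂ = m₁ + d`. Then `t^{2m₁} + t^{2m₂} = t^{2m₁} (1 + t^{2d})`, so
`g = t^{m m₁ + m m₂ - 2 m₁} (1 + t^{2d})⁻¹`, and `(1 + t^{2d})⁻¹` is a power series in `t^{2d}`.
The exponents occurring in `g` are therefore `(m - 2 - 2j) m₁ + (m + 2j) m₂` for `j ≥ 0`. The
coefficient of `m₁` may be negative, but the sum of the two coefficients is `2m - 2 ≥ m₁`, which
is enough room to trade multiples of `m₁ m₂` from the `m₂`-part to the `m₁`-part.
-/

open PowerSeries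

theorem PowerSeries.expand_inv {k : Type*} [Field k] (p : ℕ) (hp : p ≠ 0) (φ : k⟦X⟧) :
    expand p hp φ⁻¹ = (expand p hp φ)⁻¹ := by
  by_cases hφ : constantCoeff φ = 0
  · rw [inv_eq_zero.2 hφ, inv_eq_zero.2 (by rwa [constantCoeff_expand]), map_zero]
  · rw [eq_inv_iff_mul_eq_one (by rwa [constantCoeff_expand]), ← map_mul,
      PowerSeries.inv_mul_cancel φ hφ, map_one]

theorem PowerSeries.coeff_inv_one_add_X_pow_of_not_dvd {k : Type*} [Field k] {D n : ℕ}
    (h : ¬ D ∣ n) : coeff n (1 + X ^ D : k⟦X⟧)⁻¹ = 0 := by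
  rcases eq_or_ne D 0 with rfl | hD
  · have hn : n ≠ 0 := by rintro rfl; exact h (dvd_zero 0)
    rw [pow_zero, ← map_one C, ← map_add, C_inv, coeff_C, if_neg hn]
  · have hexpand : (1 + X ^ D : k⟦X⟧) = expand D hD (1 + X) := by simp
    rw [hexpand, ← expand_inv, coeff_expand_of_not_dvd _ _ _ h]

theorem AddSubmonoid.mem_closure_pair_of_eq_intCast {m₁ m₂ n : ℕ} {a b : ℤ} (h12 : m₁ ≤ m₂)
    (hm₂ : 0 < m₂) (hb : 0 ≤ b) (hab : m₁ ≤ a + b) (hn : (n : ℤ) = a * m₁ + b * m₂) :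
    n ∈ AddSubmonoid.closure ({m₁, m₂} : Set ℕ) := by
  -- `t` is the least integer with `0 ≤ a + t * m₂`; moving `t * m₁ m₂` from `b m₂` to `a m₁`
  -- keeps `b - t * m₁ ≥ 0` because `(t - 1) * m₁ ≤ (t - 1) * m₂ ≤ -a` when `t ≥ 1`.
  set t := (-a) / m₂ + 1
  have hdiv := Int.mul_ediv_add_emod (-a) m₂
  have hr := Int.emod_nonneg (-a) (by omega : (m₂ : ℤ) ≠ 0)
  have hr' := Int.emod_lt_of_pos (-a) (by omega : (0 : ℤ) < m₂)
  have hα : 0 ≤ a + t * m₂ := by linarith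
  have hβ : 0 ≤ b - t * m₁ := by
    rcases le_or_gt 0 ((-a) / m₂) with hq | hq <;> nlinarith
  obtain ⟨α, hα_eq⟩ := Int.eq_ofNat_of_zero_le hα
  obtain ⟨β, hβ_eq⟩ := Int.eq_ofNat_of_zero_le hβ
  refine (AddSubmonoid.mem_closure_pair _ _ _).2 ⟨α, β, ?_⟩
  rw [smul_eq_mul, smul_eq_mul, ← Int.natCast_inj]
  push_cast
  rw [← hα_eq, ← hβ_eq, hn]
  ring

theorem bounded_multiplicity_monomial_curves_insufficient_general
    (m m₁ m₂ : ℕ) (hm₁ : 0 < m₁) (hm₂ : 0 < m₂)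
    (hmin : 2 * min m₁ m₂ ≤ m) :
    ∃ g : PowerSeries ℝ,
      (PowerSeries.X ^ (2 * m₁) + PowerSeries.X ^ (2 * m₂)) * g
        = PowerSeries.X ^ (m * m₁ + m * m₂) ∧
      ∀ k ∉ AddSubmonoid.closure ({m₁, m₂} : Set ℕ), PowerSeries.coeff k g = 0 := by
  wlog h12 : m₁ ≤ m₂ generalizing m₁ m₂
  · obtain ⟨g, hg, hsupp⟩ := this m₂ m₁ hm₂ hm₁ (by rwa [min_comm]) (by omega)
    exact ⟨g, by rwa [add_comm (X ^ (2 * m₁)), add_comm (m * m₁)], by rwa [Set.pair_comm]⟩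
  obtain ⟨d, rfl⟩ := Nat.exists_eq_add_of_le h12
  obtain ⟨N, hN⟩ : ∃ N, m * m₁ + m * (m₁ + d) = 2 * m₁ + N :=
    Nat.exists_eq_add_of_le (le_add_right (Nat.mul_le_mul_right m₁ (by omega : 2 ≤ m)))
  have hunit : (1 + X ^ (2 * d) : ℝ⟦X⟧) * (1 + X ^ (2 * d))⁻¹ = 1 :=
    PowerSeries.mul_inv_cancel _ <| by
      simp only [map_add, map_one, map_pow, constantCoeff_X]
      positivity
  refine ⟨X ^ N * (1 + X ^ (2 * d))⁻¹, ?_, fun k hk => ?_⟩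
  · calc (X ^ (2 * m₁) + X ^ (2 * (m₁ + d)) : ℝ⟦X⟧) * (X ^ N * (1 + X ^ (2 * d))⁻¹)
        = X ^ (2 * m₁ + N) * ((1 + X ^ (2 * d)) * (1 + X ^ (2 * d))⁻¹) := by ring
      _ = X ^ (m * m₁ + m * (m₁ + d)) := by rw [hunit, mul_one, hN]
  · rw [coeff_X_pow_mul']
    split_ifs with hNk
    · by_contra hne
      obtain ⟨j, hj⟩ := not_not.1 (mt coeff_inv_one_add_X_pow_of_not_dvd hne)
      obtain rfl : k = N + 2 * d * j := by omega
      refine hk (AddSubmonoid.mem_closure_pair_of_eq_intCast h12 hm₂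
        (a := m - 2 - 2 * j) (b := m + 2 * j) (by positivity) (by omega) ?_)
      have hNz : (m * m₁ + m * (m₁ + d) : ℤ) = 2 * m₁ + N := by exact_mod_cast hN
      push_cast
      linear_combination -hNz
    · rfl

/-- Remark 12 of the paper. For positive integers `m, m₁, m₂` with
`2 · min m₁ m₂ ≤ m`, the power series `F_m(t^{m₁}, t^{m₂})`, where
`F_m(x,y) = xᵐyᵐ/(x² + y²)`, lies in `ℝ[[t^{m₁}, t^{m₂}]]`: there is `g ∈ ℝ[[t]]` with
`(t^{2m₁} + t^{2m₂}) · g = t^{m·m₁ + m·m₂}` whose coefficients vanish outside the additive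
submonoid of `ℕ` generated by `m₁` and `m₂`. -/
theorem bounded_multiplicity_monomial_curves_insufficient
    (m m₁ m₂ : ℕ) (hm : 0 < m) (hm₁ : 0 < m₁) (hm₂ : 0 < m₂)
    (hmin : 2 * min m₁ m₂ ≤ m) :
    ∃ g : PowerSeries ℝ,
      (PowerSeries.X ^ (2 * m₁) + PowerSeries.X ^ (2 * m₂)) * g
        = PowerSeries.X ^ (m * m₁ + m * m₂) ∧
      ∀ k ∉ AddSubmonoid.closure ({m₁, m₂} : Set ℕ), PowerSeries.coeff k g = 0 :=
  bounded_multiplicity_monomial_curves_insufficient_general m m₁ m₂ hm₁ hm₂ hmin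
end
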